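/- If a(0) > 0 and w(0) > 0 and (a, w) solves da/dt = −C(aw² − w), dw/dt = −C(a²w − a) with C > 0 and a(0)·w(0) ≤ 1, then a(t) > 0 and w(t) > 0 and a(t)·w(t) ≤ 1 for all t ≥ 0, and a(t)·w(t) is non-decreasing. -/

import Mathlib

/-!
The defect `u = 1 - a w` solves the linear equation `u' = -C (a² + w²) u`, so it keeps the sign
of `u 0 ≥ 0`; hence `a w ≤ 1` and `(a w)' = C (a² + w²) u ≥ 0`. For `t ≥ 0` monotonicity gives
`a t * w t ≥ a 0 * w 0 > 0`, so `a` never vanishes on `[0, t]` and, by the intermediate value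
theorem, stays positive; then so does `w`.
-/

open Set

theorem eq_mul_exp_integral_of_deriv_eq_mul {x g : ℝ → ℝ} (hx : Differentiable ℝ x)
    (hg : Continuous g) (hd : ∀ t, deriv x t = g t * x t) (t : ℝ) :
    x t = x 0 * Real.exp (∫ s in (0 : ℝ)..t, g s) := by
  set G : ℝ → ℝ := fun t => ∫ s in (0 : ℝ)..t, g s
  have hG : ∀ t, HasDerivAt G (g t) t := fun t =>
    intervalIntegral.integral_hasDerivAt_right (hg.intervalIntegrable 0 t)
      (hg.stronglyMeasurableAtFilter _ _) hg.continuousAt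
  have hderiv_zero : ∀ t, HasDerivAt (fun t => x t * Real.exp (-G t)) 0 t := by
    intro t
    refine ((hx t).hasDerivAt.mul (hG t).neg.exp).congr_deriv ?_
    rw [hd t]
    ring
  have hx_mul_exp : x t * Real.exp (-G t) = x 0 := by
    simpa [G] using is_const_of_deriv_eq_zero (fun s => (hderiv_zero s).differentiableAt)
      (fun s => (hderiv_zero s).deriv) t 0
  rw [← hx_mul_exp, mul_assoc, ← Real.exp_add, neg_add_cancel, Real.exp_zero, mul_one]

theorem nonneg_of_deriv_eq_mul {x g : ℝ → ℝ} (hx : Differentiable ℝ x) (hg : Continuous g)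
    (hd : ∀ t, deriv x t = g t * x t) (h0 : 0 ≤ x 0) (t : ℝ) : 0 ≤ x t := by
  rw [eq_mul_exp_integral_of_deriv_eq_mul hx hg hd t]
  positivity

theorem pos_of_forall_ne_zero_Icc {f : ℝ → ℝ} (hf : Continuous f) (h0 : 0 < f 0) {t : ℝ}
    (ht : 0 ≤ t) (hne : ∀ s ∈ Icc 0 t, f s ≠ 0) : 0 < f t := by
  by_contra! hft
  obtain ⟨s, hs, hfs⟩ := intermediate_value_Icc' ht hf.continuousOn ⟨hft, h0.le⟩
  exact hne s hs hfs

section GradientFlow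

variable {a w : ℝ → ℝ} {C : ℝ} (ha : Differentiable ℝ a) (hw : Differentiable ℝ w)
  (hda : ∀ t, deriv a t = -(C * (a t * w t ^ 2 - w t)))
  (hdw : ∀ t, deriv w t = -(C * (a t ^ 2 * w t - a t)))
include ha hw hda hdw

theorem deriv_mul_of_gradientFlow (t : ℝ) :
    deriv (fun t => a t * w t) t = C * (a t ^ 2 + w t ^ 2) * (1 - a t * w t) := by
  rw [deriv_fun_mul (ha t) (hw t), hda, hdw]
  ring

theorem mul_le_one_of_gradientFlow (h0 : a 0 * w 0 ≤ 1) (t : ℝ) : a t * w t ≤ 1 := by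
  have hd : ∀ t, deriv (fun t => 1 - a t * w t) t
      = -(C * (a t ^ 2 + w t ^ 2)) * (1 - a t * w t) := fun t => by
    rw [deriv_const_sub, deriv_mul_of_gradientFlow ha hw hda hdw]
    ring
  have hk : Continuous fun t => -(C * (a t ^ 2 + w t ^ 2)) :=
    (continuous_const.mul ((ha.continuous.pow 2).add (hw.continuous.pow 2))).neg
  exact sub_nonneg.1 <| nonneg_of_deriv_eq_mul (x := fun t => 1 - a t * w t)
    (fun t => ((ha t).mul (hw t)).const_sub 1) hk hd (sub_nonneg.2 h0) t

theorem monotone_mul_of_gradientFlow (hC : 0 ≤ C) (h0 : a 0 * w 0 ≤ 1) :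
    Monotone fun t => a t * w t :=
  monotone_of_deriv_nonneg (ha.mul hw) fun t => by
    rw [deriv_mul_of_gradientFlow ha hw hda hdw]
    have := sub_nonneg.2 (mul_le_one_of_gradientFlow ha hw hda hdw h0 t)
    positivity

end GradientFlow

theorem stmt_16 (a w : ℝ → ℝ) (C : ℝ) (hC : 0 < C)
    (ha : Differentiable ℝ a) (hw : Differentiable ℝ w)
    (hda : ∀ t, deriv a t = -(C * (a t * w t ^ 2 - w t)))
    (hdw : ∀ t, deriv w t = -(C * (a t ^ 2 * w t - a t)))
    (ha0 : 0 < a 0) (hw0 : 0 < w 0) (hprod0 : a 0 * w 0 ≤ 1) :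
    (∀ t : ℝ, 0 ≤ t → 0 < a t ∧ 0 < w t ∧ a t * w t ≤ 1) ∧
    (∀ s t : ℝ, 0 ≤ s → s ≤ t → a s * w s ≤ a t * w t) := by
  have hmono := monotone_mul_of_gradientFlow ha hw hda hdw hC.le hprod0
  have hprod_pos : ∀ t, 0 ≤ t → 0 < a t * w t := fun t ht =>
    (mul_pos ha0 hw0).trans_le (hmono ht)
  refine ⟨fun t ht => ?_, fun s t _ hst => hmono hst⟩
  have hat : 0 < a t := pos_of_forall_ne_zero_Icc ha.continuous ha0 ht fun s hs =>
    left_ne_zero_of_mul (hprod_pos s hs.1).ne'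
  exact ⟨hat, pos_of_mul_pos_right (hprod_pos t ht) hat.le,
    mul_le_one_of_gradientFlow ha hw hda hdw hprod0 t⟩
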